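/- Assume that R₀ := BᵀB + σ²·B̄ᵀB̄ is positive definite and that ρ* > 0. Then the following two statements are equivalent: (i) η(x) < ∞ for every G-measurable x ∈ L²(Ω;ℝⁿ), and sup{η(x) : x is G-measurable with ‖x‖_ms = 1} < ∞; (ii) there exists κ ≥ 0 such that for every G-measurable square-integrable initial state x₀ there is an admissible policy u ∈ U whose trajectory satisfies E[x_kᵀx_k] ≤ κ·(ρ*)^{2k}·E[x₀ᵀx₀] for all k ∈ ℕ. -/

import Mathlib

open Matrix MeasureTheory ProbabilityTheory
open scoped ENNReal Classical

noncomputable section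

namespace SCS

/-! ### Matrix-analytic definitions -/

/-- Rayleigh-quotient definition of the largest eigenvalue of a symmetric matrix. -/
def lamMax {n : ℕ} (M : Matrix (Fin n) (Fin n) ℝ) : ℝ :=
  ⨆ x : {x : Fin n → ℝ // x ⬝ᵥ x = 1}, x.1 ⬝ᵥ M.mulVec x.1

/-- Rayleigh-quotient definition of the smallest eigenvalue of a symmetric matrix. -/
def lamMin {n : ℕ} (M : Matrix (Fin n) (Fin n) ℝ) : ℝ :=
  ⨅ x : {x : Fin n → ℝ // x ⬝ᵥ x = 1}, x.1 ⬝ᵥ M.mulVec x.1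

/-- Spectral norm (the operator norm induced by the Euclidean norm). -/
def specNorm {p q : ℕ} (M : Matrix (Fin p) (Fin q) ℝ) : ℝ :=
  Real.sqrt (lamMax (Mᵀ * M))

variable {n m : ℕ}

/-- `R(P) = BᵀPB + σ²·B̄ᵀPB̄`. -/
def Rop (σ : ℝ) (B Bbar : Matrix (Fin n) (Fin m) ℝ) (P : Matrix (Fin n) (Fin n) ℝ) :
    Matrix (Fin m) (Fin m) ℝ :=
  Bᵀ * P * B + σ ^ 2 • (Bbarᵀ * P * Bbar)

/-- `S(P) = AᵀPB + σ²·ĀᵀPB̄`. -/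
def Sop (σ : ℝ) (A Abar : Matrix (Fin n) (Fin n) ℝ) (B Bbar : Matrix (Fin n) (Fin m) ℝ)
    (P : Matrix (Fin n) (Fin n) ℝ) : Matrix (Fin n) (Fin m) ℝ :=
  Aᵀ * P * B + σ ^ 2 • (Abarᵀ * P * Bbar)

/-- `Φ(P) = AᵀPA + σ²·ĀᵀPĀ − S(P)·R(P)⁻¹·S(P)ᵀ`. -/
def Phi (σ : ℝ) (A Abar : Matrix (Fin n) (Fin n) ℝ) (B Bbar : Matrix (Fin n) (Fin m) ℝ)
    (P : Matrix (Fin n) (Fin n) ℝ) : Matrix (Fin n) (Fin n) ℝ :=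
  Aᵀ * P * A + σ ^ 2 • (Abarᵀ * P * Abar)
    - Sop σ A Abar B Bbar P * (Rop σ B Bbar P)⁻¹ * (Sop σ A Abar B Bbar P)ᵀ

/-- `K(P) = R(P)⁻¹·S(P)ᵀ`. -/
def Kgain (σ : ℝ) (A Abar : Matrix (Fin n) (Fin n) ℝ) (B Bbar : Matrix (Fin n) (Fin m) ℝ)
    (P : Matrix (Fin n) (Fin n) ℝ) : Matrix (Fin m) (Fin n) ℝ :=
  (Rop σ B Bbar P)⁻¹ * (Sop σ A Abar B Bbar P)ᵀ

/-- `C_A = λ_max(AAᵀ + σ²·ĀĀᵀ)`. -/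
def CA (σ : ℝ) (A Abar : Matrix (Fin n) (Fin n) ℝ) : ℝ :=
  lamMax (A * Aᵀ + σ ^ 2 • (Abar * Abarᵀ))

/-- `δ_τ = (τ/n)/((1−τ)·C_A + τ)`. -/
def deltaTau (σ : ℝ) (A Abar : Matrix (Fin n) (Fin n) ℝ) (τ : ℝ) : ℝ :=
  (τ / (n : ℝ)) / ((1 - τ) * CA σ A Abar + τ)

/-- The regularized normalized operator
`Φ̂_τ(P) = ((1−τ)·Φ(P) + (τ/n)·I) / Tr((1−τ)·Φ(P) + (τ/n)·I)`. -/
def PhiHat (σ : ℝ) (A Abar : Matrix (Fin n) (Fin n) ℝ) (B Bbar : Matrix (Fin n) (Fin m) ℝ)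
    (τ : ℝ) (P : Matrix (Fin n) (Fin n) ℝ) : Matrix (Fin n) (Fin n) ℝ :=
  (Matrix.trace ((1 - τ) • Phi σ A Abar B Bbar P
      + (τ / (n : ℝ)) • (1 : Matrix (Fin n) (Fin n) ℝ)))⁻¹ •
    ((1 - τ) • Phi σ A Abar B Bbar P + (τ / (n : ℝ)) • (1 : Matrix (Fin n) (Fin n) ℝ))

/-- The positive-semidefinite square root, as `Matrix.PosSemidef.sqrt` was defined in the
older Mathlib (that declaration no longer exists). -/
def psdSqrt {n : ℕ} {P : Matrix (Fin n) (Fin n) ℝ} (h : P.PosSemidef) : Matrix (Fin n) (Fin n) ℝ :=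
  h.1.eigenvectorUnitary.1 * diagonal ((↑) ∘ Real.sqrt ∘ h.1.eigenvalues) *
    (star h.1.eigenvectorUnitary : Matrix (Fin n) (Fin n) ℝ)

/-- Inverse of the positive-semidefinite square root (junk value `0` off the PSD cone),
so `invSqrt P = P^{−1/2}` for positive definite `P`. -/
def invSqrt {n : ℕ} (P : Matrix (Fin n) (Fin n) ℝ) : Matrix (Fin n) (Fin n) ℝ :=
  if h : P.PosSemidef then (psdSqrt h)⁻¹ else 0

/-- `L(P) = λ_min(P^{−1/2}·Φ(P)·P^{−1/2})`. -/
def Lval (σ : ℝ) (A Abar : Matrix (Fin n) (Fin n) ℝ) (B Bbar : Matrix (Fin n) (Fin m) ℝ)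
    (P : Matrix (Fin n) (Fin n) ℝ) : ℝ :=
  lamMin (invSqrt P * Phi σ A Abar B Bbar P * invSqrt P)

/-- `U(P) = λ_max(P^{−1/2}·Φ(P)·P^{−1/2})`. -/
def Uval (σ : ℝ) (A Abar : Matrix (Fin n) (Fin n) ℝ) (B Bbar : Matrix (Fin n) (Fin m) ℝ)
    (P : Matrix (Fin n) (Fin n) ℝ) : ℝ :=
  lamMax (invSqrt P * Phi σ A Abar B Bbar P * invSqrt P)

/-- The trace-normalized slice `S_a = {X symmetric : X ⪰ a·I, Tr X = 1}`. -/
def Slice (a : ℝ) : Set (Matrix (Fin n) (Fin n) ℝ) :=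
  {X | X.IsSymm ∧ (X - a • (1 : Matrix (Fin n) (Fin n) ℝ)).PosSemidef ∧ X.trace = 1}

/-- `α_A = ‖A‖² + σ²·‖Ā‖²` (spectral norms). -/
def alphaA (σ : ℝ) (A Abar : Matrix (Fin n) (Fin n) ℝ) : ℝ :=
  specNorm A ^ 2 + σ ^ 2 * specNorm Abar ^ 2

/-- `α_S = ‖A‖·‖B‖ + σ²·‖Ā‖·‖B̄‖`. -/
def alphaS (σ : ℝ) (A Abar : Matrix (Fin n) (Fin n) ℝ) (B Bbar : Matrix (Fin n) (Fin m) ℝ) : ℝ :=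
  specNorm A * specNorm B + σ ^ 2 * specNorm Abar * specNorm Bbar

/-- `α_R = ‖B‖² + σ²·‖B̄‖²`. -/
def alphaR (σ : ℝ) (B Bbar : Matrix (Fin n) (Fin m) ℝ) : ℝ :=
  specNorm B ^ 2 + σ ^ 2 * specNorm Bbar ^ 2

/-- `c_R(a) = 1/(a·λ_min(R₀))`. -/
def cR (σ : ℝ) (B Bbar : Matrix (Fin n) (Fin m) ℝ) (a : ℝ) : ℝ :=
  1 / (a * lamMin (Bᵀ * B + σ ^ 2 • (Bbarᵀ * Bbar)))

/-- `L_Φ(a) = α_A + 2·α_S²·c_R(a) + α_S²·α_R·c_R(a)²`. -/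
def LPhi (σ : ℝ) (A Abar : Matrix (Fin n) (Fin n) ℝ) (B Bbar : Matrix (Fin n) (Fin m) ℝ)
    (a : ℝ) : ℝ :=
  alphaA σ A Abar + 2 * alphaS σ A Abar B Bbar ^ 2 * cR σ B Bbar a
    + alphaS σ A Abar B Bbar ^ 2 * alphaR σ B Bbar * cR σ B Bbar a ^ 2

/-- `C_Φ(a) = α_A + α_S²·c_R(a)`. -/
def CPhi (σ : ℝ) (A Abar : Matrix (Fin n) (Fin n) ℝ) (B Bbar : Matrix (Fin n) (Fin m) ℝ)
    (a : ℝ) : ℝ :=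
  alphaA σ A Abar + alphaS σ A Abar B Bbar ^ 2 * cR σ B Bbar a

/-- The contraction modulus `Λ(τ)`. -/
def LambdaTau (σ : ℝ) (A Abar : Matrix (Fin n) (Fin n) ℝ) (B Bbar : Matrix (Fin n) (Fin m) ℝ)
    (τ : ℝ) : ℝ :=
  (1 - τ) * LPhi σ A Abar B Bbar (deltaTau σ A Abar τ) / τ
    + (1 - τ) * ((1 - τ) * CPhi σ A Abar B Bbar (deltaTau σ A Abar τ) + τ / (n : ℝ))
        * (n : ℝ) * LPhi σ A Abar B Bbar (deltaTau σ A Abar τ) / τ ^ 2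

/-- The directional derivative `DΦ(P)[H]`. -/
def DPhi (σ : ℝ) (A Abar : Matrix (Fin n) (Fin n) ℝ) (B Bbar : Matrix (Fin n) (Fin m) ℝ)
    (P H : Matrix (Fin n) (Fin n) ℝ) : Matrix (Fin n) (Fin n) ℝ :=
  Aᵀ * H * A + σ ^ 2 • (Abarᵀ * H * Abar)
    - (Aᵀ * H * B + σ ^ 2 • (Abarᵀ * H * Bbar)) * (Rop σ B Bbar P)⁻¹ * (Sop σ A Abar B Bbar P)ᵀ
    - Sop σ A Abar B Bbar P * (Rop σ B Bbar P)⁻¹ * (Bᵀ * H * A + σ ^ 2 • (Bbarᵀ * H * Abar))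
    + Sop σ A Abar B Bbar P * (Rop σ B Bbar P)⁻¹ * (Bᵀ * H * B + σ ^ 2 • (Bbarᵀ * H * Bbar))
        * (Rop σ B Bbar P)⁻¹ * (Sop σ A Abar B Bbar P)ᵀ

/-- `s_τ(P) = Tr((1−τ)·Φ(P) + (τ/n)·I)`. -/
def sTau (σ : ℝ) (A Abar : Matrix (Fin n) (Fin n) ℝ) (B Bbar : Matrix (Fin n) (Fin m) ℝ)
    (τ : ℝ) (P : Matrix (Fin n) (Fin n) ℝ) : ℝ :=
  Matrix.trace ((1 - τ) • Phi σ A Abar B Bbar P + (τ / (n : ℝ)) • (1 : Matrix (Fin n) (Fin n) ℝ))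

/-- The directional derivative
`DΦ̂_τ(P)[H] = ((1−τ)/s_τ(P))·(DΦ(P)[H] − Φ̂_τ(P)·Tr(DΦ(P)[H]))`. -/
def DPhiHat (σ : ℝ) (A Abar : Matrix (Fin n) (Fin n) ℝ) (B Bbar : Matrix (Fin n) (Fin m) ℝ)
    (τ : ℝ) (P H : Matrix (Fin n) (Fin n) ℝ) : Matrix (Fin n) (Fin n) ℝ :=
  ((1 - τ) / sTau σ A Abar B Bbar τ P) •
    (DPhi σ A Abar B Bbar P H
      - Matrix.trace (DPhi σ A Abar B Bbar P H) • PhiHat σ A Abar B Bbar τ P)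

/-- The local Lipschitz modulus `Lip(P,τ) = sup{‖DΦ̂_τ(P)[H]‖ : H symmetric, ‖H‖ = 1}`. -/
def LipMod (σ : ℝ) (A Abar : Matrix (Fin n) (Fin n) ℝ) (B Bbar : Matrix (Fin n) (Fin m) ℝ)
    (τ : ℝ) (P : Matrix (Fin n) (Fin n) ℝ) : ℝ :=
  ⨆ H : {H : Matrix (Fin n) (Fin n) ℝ // H.IsSymm ∧ specNorm H = 1},
    specNorm (DPhiHat σ A Abar B Bbar τ P H.1)

/-! ### Probabilistic definitions -/

/-- The Gaussian measure on `ℝ` with mean `0` and variance `σ²`. -/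
def gauss (σ : ℝ) : Measure ℝ := gaussianReal 0 ⟨σ ^ 2, sq_nonneg σ⟩

/-- The Gaussian expectation `E_ω[((A+Āω)x + (B+B̄ω)v)ᵀ·P·((A+Āω)x + (B+B̄ω)v)]`. -/
def qform (σ : ℝ) (A Abar : Matrix (Fin n) (Fin n) ℝ) (B Bbar : Matrix (Fin n) (Fin m) ℝ)
    (P : Matrix (Fin n) (Fin n) ℝ) (x : Fin n → ℝ) (v : Fin m → ℝ) : ℝ :=
  ∫ s, (((A + s • Abar).mulVec x + (B + s • Bbar).mulVec v) ⬝ᵥ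
      P.mulVec ((A + s • Abar).mulVec x + (B + s • Bbar).mulVec v)) ∂(gauss σ)

/-- The data of the stochastic control system: a probability space `(Ω, F, Pr)`,
system matrices `A, Ā, B, B̄`, a noise level `σ > 0`, an i.i.d. sequence `w` of
Gaussian random variables with mean `0` and variance `σ²`, and a sub-σ-algebra `G`
independent of the noise. -/
structure Ctx (n m : ℕ) (Ω : Type) [mΩ : MeasurableSpace Ω] where
  Pr : Measure Ω
  isProb : IsProbabilityMeasure Pr
  σ : ℝ
  hσ : 0 < σ
  A : Matrix (Fin n) (Fin n) ℝ
  Abar : Matrix (Fin n) (Fin n) ℝ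
  B : Matrix (Fin n) (Fin m) ℝ
  Bbar : Matrix (Fin n) (Fin m) ℝ
  w : ℕ → Ω → ℝ
  hw_meas : ∀ k, Measurable (w k)
  hw_gauss : ∀ k, Pr.map (w k) = gauss σ
  hw_iid : iIndepFun w Pr
  G : MeasurableSpace Ω
  hG : G ≤ mΩ
  hw_indep_G : Indep (⨆ k, MeasurableSpace.comap (w k) inferInstance) G Pr

variable {Ω : Type} [MeasurableSpace Ω]

/-- The filtration `F_k = G ∨ σ(ω₀, …, ω_{k−1})`. -/
def Ctx.Fk (C : Ctx n m Ω) (k : ℕ) : MeasurableSpace Ω :=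
  C.G ⊔ ⨆ i ∈ Finset.range k, MeasurableSpace.comap (C.w i) inferInstance

/-- Admissible policies: `u_k` is `F_k`-measurable and square-integrable. -/
def Ctx.Admissible (C : Ctx n m Ω) (u : ℕ → Ω → Fin m → ℝ) : Prop :=
  ∀ k, Measurable[C.Fk k] (u k) ∧ MemLp (u k) 2 C.Pr

/-- Admissible initial states: `G`-measurable and square-integrable. -/
def Ctx.InitOK (C : Ctx n m Ω) (x : Ω → Fin n → ℝ) : Prop :=
  Measurable[C.G] x ∧ MemLp x 2 C.Pr

/-- The state trajectory `x_{k+1} = (A + Ā·ω_k)x_k + (B + B̄·ω_k)u_k`. -/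
def Ctx.traj (C : Ctx n m Ω) (x0 : Ω → Fin n → ℝ) (u : ℕ → Ω → Fin m → ℝ) :
    ℕ → Ω → Fin n → ℝ
  | 0 => x0
  | k + 1 => fun s =>
      (C.A + C.w k s • C.Abar).mulVec (C.traj x0 u k s)
      + (C.B + C.w k s • C.Bbar).mulVec (u k s)

/-- `E[xᵀx]`. -/
def msSq {n : ℕ} (Pr : Measure Ω) (x : Ω → Fin n → ℝ) : ℝ := ∫ s, x s ⬝ᵥ x s ∂Pr

/-- The mean-square norm `‖x‖_ms = (E[xᵀx])^{1/2}`. -/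
def msNorm {n : ℕ} (Pr : Measure Ω) (x : Ω → Fin n → ℝ) : ℝ := Real.sqrt (msSq Pr x)

/-- The mean-square stabilizing rate `ρ(u)` of a policy. -/
def Ctx.rate (C : Ctx n m Ω) (u : ℕ → Ω → Fin m → ℝ) : ℝ :=
  sInf {ρ : ℝ | 0 ≤ ρ ∧ ∃ κ : ℝ, 0 ≤ κ ∧ ∀ x0, C.InitOK x0 → ∀ k : ℕ,
    msSq C.Pr (C.traj x0 u k) ≤ κ * ρ ^ (2 * k) * msSq C.Pr x0}

/-- The optimal stabilizing rate `ρ* = inf_{u ∈ U} ρ(u)`. -/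
def Ctx.rhoStar (C : Ctx n m Ω) : ℝ :=
  sInf {r : ℝ | ∃ u, C.Admissible u ∧ r = C.rate u}

/-- `η(x) = inf_{u ∈ U} sup_{k ∈ ℕ} ‖x_k‖_ms/(ρ*)^k` (with values in `[0,∞]`). -/
def Ctx.eta (C : Ctx n m Ω) (x : Ω → Fin n → ℝ) : ℝ≥0∞ :=
  ⨅ (u : ℕ → Ω → Fin m → ℝ) (_ : C.Admissible u),
    ⨆ k : ℕ, ENNReal.ofReal (msNorm C.Pr (C.traj x u k) / C.rhoStar ^ k)

/-- The per-trajectory mean-square stabilizing rate `ρ(u; x₀)`. -/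
def Ctx.rateAt (C : Ctx n m Ω) (x0 : Ω → Fin n → ℝ) (u : ℕ → Ω → Fin m → ℝ) : ℝ :=
  sInf {ρ : ℝ | 0 ≤ ρ ∧ ∃ κ : ℝ, 0 ≤ κ ∧ ∀ k : ℕ,
    msSq C.Pr (C.traj x0 u k) ≤ κ * ρ ^ (2 * k) * msSq C.Pr x0}

/-- The cost `J(x₀,u) = limsup_k (1/k)·log(E[x_kᵀx_k]/E[x₀ᵀx₀])`. -/
def Ctx.J (C : Ctx n m Ω) (x0 : Ω → Fin n → ℝ) (u : ℕ → Ω → Fin m → ℝ) : ℝ :=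
  Filter.limsup
    (fun k : ℕ => (1 / (k : ℝ)) * Real.log (msSq C.Pr (C.traj x0 u k) / msSq C.Pr x0))
    Filter.atTop

/-- Feedback policies: `u_k = μ_k(x_k)` for Borel-measurable `μ_k`. -/
def Ctx.IsFeedback (C : Ctx n m Ω) (x0 : Ω → Fin n → ℝ) (u : ℕ → Ω → Fin m → ℝ) : Prop :=
  ∃ μ : ℕ → (Fin n → ℝ) → Fin m → ℝ, (∀ k, Measurable (μ k)) ∧
    ∀ k s, u k s = μ k (C.traj x0 u k s)

/-- The closed-loop trajectory under a stationary feedback law `μ`. -/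
def Ctx.fbTraj (C : Ctx n m Ω) (x0 : Ω → Fin n → ℝ) (μ : (Fin n → ℝ) → Fin m → ℝ) :
    ℕ → Ω → Fin n → ℝ
  | 0 => x0
  | k + 1 => fun s =>
      (C.A + C.w k s • C.Abar).mulVec (C.fbTraj x0 μ k s)
      + (C.B + C.w k s • C.Bbar).mulVec (μ (C.fbTraj x0 μ k s))

/-- The stationary policy `u* given by `u*_k = μ(x*_k)` along its own closed-loop
trajectory, for a stationary feedback law `μ`. -/
def Ctx.fbPolicy (C : Ctx n m Ω) (x0 : Ω → Fin n → ℝ) (μ : (Fin n → ℝ) → Fin m → ℝ) :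
    ℕ → Ω → Fin m → ℝ :=
  fun k s => μ (C.fbTraj x0 μ k s)

/-- The linear feedback policy `u*_k = −K·x*_k` along its own trajectory. -/
def Ctx.linFbPolicy (C : Ctx n m Ω) (x0 : Ω → Fin n → ℝ) (K : Matrix (Fin m) (Fin n) ℝ) :
    ℕ → Ω → Fin m → ℝ :=
  C.fbPolicy x0 (fun x => -(K.mulVec x))

/-- `ξ_♯(x) = inf_{v ∈ ℝ^m} ‖(A + Ā·ω)x + (B + B̄·ω)v‖_ms`, realized with `ω = ω₀`. -/
def Ctx.xiSharp (C : Ctx n m Ω) (x : Ω → Fin n → ℝ) : ℝ :=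
  ⨅ v : Fin m → ℝ, msNorm C.Pr (fun s =>
    (C.A + C.w 0 s • C.Abar).mulVec (x s) + (C.B + C.w 0 s • C.Bbar).mulVec v)

/-- Extended-real logarithm: `log t` for `t > 0` and `−∞` for `t ≤ 0`. -/
def elog (t : ℝ) : EReal := if t ≤ 0 then ⊥ else ((Real.log t : ℝ) : EReal)

/-- The cost `J(x₀,u)` interpreted with values in `[−∞,∞]`. -/
def Ctx.Je (C : Ctx n m Ω) (x0 : Ω → Fin n → ℝ) (u : ℕ → Ω → Fin m → ℝ) : EReal :=
  Filter.limsup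
    (fun k : ℕ => ((1 / (k : ℝ) : ℝ) : EReal) * elog (msSq C.Pr (C.traj x0 u k) / msSq C.Pr x0))
    Filter.atTop

/-!
Both conditions are homogeneous in the initial state: scaling `x₀` and the policy by `c`
scales the whole trajectory by `c`. Hence a bound `η ≤ M` on the unit sphere of initial states
yields the attainability constant `κ = t²` for any `t > M`, and conversely a constant `κ` gives
`η(x) ≤ √κ · ‖x‖_ms`. Initial states of zero mean-square norm are driven by the zero policy.
-/

section MeanSquare

variable (Pr : Measure Ω)

lemma msSq_nonneg (x : Ω → Fin n → ℝ) : 0 ≤ msSq Pr x :=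
  integral_nonneg fun _ => Finset.sum_nonneg fun _ _ => mul_self_nonneg _

lemma msNorm_nonneg (x : Ω → Fin n → ℝ) : 0 ≤ msNorm Pr x :=
  Real.sqrt_nonneg _

lemma msNorm_sq (x : Ω → Fin n → ℝ) : msNorm Pr x ^ 2 = msSq Pr x :=
  Real.sq_sqrt (msSq_nonneg Pr x)

lemma msSq_smul (c : ℝ) (x : Ω → Fin n → ℝ) : msSq Pr (c • x) = c ^ 2 * msSq Pr x := by
  rw [msSq, msSq, ← integral_const_mul]
  congr 1 with s
  simp only [Pi.smul_apply, smul_dotProduct, dotProduct_smul, smul_eq_mul]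
  ring

lemma msNorm_smul (c : ℝ) (x : Ω → Fin n → ℝ) : msNorm Pr (c • x) = |c| * msNorm Pr x := by
  rw [msNorm, msSq_smul, Real.sqrt_mul (sq_nonneg c), Real.sqrt_sq_eq_abs, msNorm]

lemma msNorm_div_pow_le_iff {ρ t : ℝ} (hρ : 0 < ρ) (ht : 0 ≤ t) (x : Ω → Fin n → ℝ) (k : ℕ) :
    msNorm Pr x / ρ ^ k ≤ t ↔ msSq Pr x ≤ t ^ 2 * ρ ^ (2 * k) := by
  rw [div_le_iff₀ (pow_pos hρ k), msNorm, Real.sqrt_le_iff]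
  have : (t * ρ ^ k) ^ 2 = t ^ 2 * ρ ^ (2 * k) := by ring
  simp [this, mul_nonneg ht (pow_pos hρ k).le]

lemma integrable_dotProduct_self {x : Ω → Fin n → ℝ} (hx : MemLp x 2 Pr) :
    Integrable (fun s => x s ⬝ᵥ x s) Pr :=
  integrable_finsetSum _ fun i _ => by
    simpa only [sq] using (memLp_pi_iff.mp hx i).integrable_sq

lemma msSq_eq_zero_iff {x : Ω → Fin n → ℝ} (hx : MemLp x 2 Pr) :
    msSq Pr x = 0 ↔ x =ᵐ[Pr] 0 := by
  rw [msSq, integral_eq_zero_iff_of_nonneg (f := fun s => x s ⬝ᵥ x s)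
    (fun _ => Finset.sum_nonneg fun _ _ => mul_self_nonneg _) (integrable_dotProduct_self Pr hx)]
  exact Filter.eventually_congr (Filter.Eventually.of_forall fun _ => dotProduct_self_eq_zero)

end MeanSquare

namespace Ctx

variable (C : Ctx n m Ω)

lemma traj_smul (c : ℝ) (x0 : Ω → Fin n → ℝ) (u : ℕ → Ω → Fin m → ℝ) (k : ℕ) :
    C.traj (c • x0) (c • u) k = c • C.traj x0 u k := by
  induction k with
  | zero => rfl
  | succ k ih =>
    funext s
    simp only [traj, ih, Pi.smul_apply, mulVec_smul, smul_add]

lemma traj_zero_ae_eq_zero {x0 : Ω → Fin n → ℝ} (hx0 : x0 =ᵐ[C.Pr] 0) (k : ℕ) :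
    C.traj x0 0 k =ᵐ[C.Pr] 0 := by
  induction k with
  | zero => exact hx0
  | succ k ih =>
    filter_upwards [ih] with s hs
    simp [traj, hs]

lemma admissible_zero : C.Admissible 0 :=
  fun _ => ⟨measurable_const, MemLp.zero⟩

def AttainsOptimalRate (κ : ℝ) (x0 : Ω → Fin n → ℝ) : Prop :=
  ∃ u, C.Admissible u ∧ ∀ k : ℕ,
    msSq C.Pr (C.traj x0 u k) ≤ κ * C.rhoStar ^ (2 * k) * msSq C.Pr x0

variable {C}

lemma Admissible.const_smul {u : ℕ → Ω → Fin m → ℝ} (hu : C.Admissible u)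
    (c : ℝ) : C.Admissible (c • u) :=
  fun k => ⟨(hu k).1.const_smul c, (hu k).2.const_smul c⟩

lemma InitOK.const_smul {x : Ω → Fin n → ℝ} (hx : C.InitOK x) (c : ℝ) :
    C.InitOK (c • x) :=
  ⟨hx.1.const_smul c, hx.2.const_smul c⟩

lemma AttainsOptimalRate.smul {κ : ℝ} {x0 : Ω → Fin n → ℝ} (h : C.AttainsOptimalRate κ x0)
    (c : ℝ) : C.AttainsOptimalRate κ (c • x0) := by
  obtain ⟨u, hu, hbound⟩ := h
  refine ⟨c • u, hu.const_smul c, fun k => ?_⟩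
  rw [traj_smul, msSq_smul, msSq_smul]
  calc c ^ 2 * msSq C.Pr (C.traj x0 u k)
      ≤ c ^ 2 * (κ * C.rhoStar ^ (2 * k) * msSq C.Pr x0) :=
        mul_le_mul_of_nonneg_left (hbound k) (sq_nonneg c)
    _ = κ * C.rhoStar ^ (2 * k) * (c ^ 2 * msSq C.Pr x0) := by ring

lemma attainsOptimalRate_of_msSq_eq_zero (κ : ℝ) {x0 : Ω → Fin n → ℝ}
    (hx0 : MemLp x0 2 C.Pr) (h0 : msSq C.Pr x0 = 0) : C.AttainsOptimalRate κ x0 := by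
  have hx0 : x0 =ᵐ[C.Pr] 0 := (msSq_eq_zero_iff C.Pr hx0).mp h0
  refine ⟨0, C.admissible_zero, fun k => ?_⟩
  have htraj : msSq C.Pr (C.traj x0 0 k) = 0 := by
    rw [msSq, integral_congr_ae (g := fun _ => (0 : ℝ))
      ((C.traj_zero_ae_eq_zero hx0 k).mono fun s hs => by simp [hs])]
    exact integral_zero _ _
  simp [htraj, h0]

lemma attainsOptimalRate_of_forall_msNorm_eq_one {κ : ℝ}
    (h : ∀ y, C.InitOK y → msNorm C.Pr y = 1 → C.AttainsOptimalRate κ y)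
    {x : Ω → Fin n → ℝ} (hx : C.InitOK x) : C.AttainsOptimalRate κ x := by
  rcases (msSq_nonneg C.Pr x).eq_or_lt with h0 | hpos
  · exact attainsOptimalRate_of_msSq_eq_zero κ hx.2 h0.symm
  set c := msNorm C.Pr x
  have hc : 0 < c := Real.sqrt_pos.mpr hpos
  have hunit : msNorm C.Pr (c⁻¹ • x) = 1 := by
    rw [msNorm_smul, abs_of_pos (inv_pos.mpr hc), inv_mul_cancel₀ hc.ne']
  simpa [smul_inv_smul₀ hc.ne'] using (h _ (hx.const_smul c⁻¹) hunit).smul c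

lemma eta_le_of_attainsOptimalRate (hρ : 0 < C.rhoStar) {κ : ℝ} (hκ : 0 ≤ κ)
    {x : Ω → Fin n → ℝ} (h : C.AttainsOptimalRate κ x) :
    C.eta x ≤ ENNReal.ofReal (√κ * msNorm C.Pr x) := by
  obtain ⟨u, hu, hbound⟩ := h
  refine iInf₂_le_of_le u hu (iSup_le fun k => ENNReal.ofReal_le_ofReal ?_)
  rw [msNorm_div_pow_le_iff C.Pr hρ (mul_nonneg (Real.sqrt_nonneg κ) (msNorm_nonneg _ _)),
    mul_pow, Real.sq_sqrt hκ, msNorm_sq]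
  linarith [hbound k]

lemma attainsOptimalRate_of_eta_lt (hρ : 0 < C.rhoStar) {t : ℝ} {x : Ω → Fin n → ℝ}
    (hx : msNorm C.Pr x = 1) (h : C.eta x < ENNReal.ofReal t) :
    C.AttainsOptimalRate (t ^ 2) x := by
  have ht : 0 < t := ENNReal.ofReal_pos.mp (pos_of_gt h)
  obtain ⟨u, hu, hsup⟩ : ∃ u, C.Admissible u ∧
      (⨆ k, ENNReal.ofReal (msNorm C.Pr (C.traj x u k) / C.rhoStar ^ k)) < ENNReal.ofReal t := by
    simpa only [eta, iInf_lt_iff, exists_prop] using h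
  refine ⟨u, hu, fun k => ?_⟩
  have hk := (ENNReal.ofReal_lt_ofReal_iff ht).mp ((le_iSup _ k).trans_lt hsup)
  have hx2 : msSq C.Pr x = 1 := by rw [← msNorm_sq, hx, one_pow]
  rw [hx2, mul_one]
  exact (msNorm_div_pow_le_iff C.Pr hρ ht.le _ k).mp hk.le

end Ctx

theorem attainability_iff_general {n m : ℕ} {Ω : Type} [MeasurableSpace Ω] (C : Ctx n m Ω)
    (hrho : 0 < C.rhoStar) :
    ((∀ x : Ω → Fin n → ℝ, C.InitOK x → C.eta x < ⊤) ∧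
      (⨆ x : {x : Ω → Fin n → ℝ // C.InitOK x ∧ msNorm C.Pr x = 1}, C.eta x.1) < ⊤)
    ↔
    (∃ κ : ℝ, 0 ≤ κ ∧ ∀ x0 : Ω → Fin n → ℝ, C.InitOK x0 →
      ∃ u, C.Admissible u ∧ ∀ k : ℕ,
        msSq C.Pr (C.traj x0 u k) ≤ κ * C.rhoStar ^ (2 * k) * msSq C.Pr x0) := by
  constructor
  · rintro ⟨-, hsup⟩
    obtain ⟨t, -, ht, -⟩ := ENNReal.lt_iff_exists_real_btwn.mp hsup
    refine ⟨t ^ 2, sq_nonneg t, fun x0 hx0 =>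
      Ctx.attainsOptimalRate_of_forall_msNorm_eq_one (fun y hy hy1 => ?_) hx0⟩
    exact Ctx.attainsOptimalRate_of_eta_lt hrho hy1
      ((le_iSup (fun x : {x : Ω → Fin n → ℝ // C.InitOK x ∧ msNorm C.Pr x = 1} => C.eta x.1)
        ⟨y, hy, hy1⟩).trans_lt ht)
  · rintro ⟨κ, hκ, h⟩
    have hη : ∀ x, C.InitOK x → C.eta x ≤ ENNReal.ofReal (√κ * msNorm C.Pr x) :=
      fun x hx => Ctx.eta_le_of_attainsOptimalRate hrho hκ (h x hx)
    refine ⟨fun x hx => (hη x hx).trans_lt ENNReal.ofReal_lt_top, ?_⟩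
    refine (iSup_le fun x => ?_).trans_lt (ENNReal.ofReal_lt_top (r := √κ))
    simpa only [x.2.2, mul_one] using hη x.1 x.2.1

/-- Under the nondegeneracy assumption `R₀ ≻ 0` and `ρ* > 0`,
the finiteness and uniform boundedness of `η` is equivalent to the exact
attainability of the optimal stabilizing rate `ρ*`. -/
theorem attainability_iff {n m : ℕ} {Ω : Type} [MeasurableSpace Ω] (C : Ctx n m Ω)
    (hn : 0 < n) (hm : 0 < m)
    (hR0 : (C.Bᵀ * C.B + C.σ ^ 2 • (C.Bbarᵀ * C.Bbar)).PosDef)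
    (hrho : 0 < C.rhoStar) :
    ((∀ x : Ω → Fin n → ℝ, C.InitOK x → C.eta x < ⊤) ∧
      (⨆ x : {x : Ω → Fin n → ℝ // C.InitOK x ∧ msNorm C.Pr x = 1}, C.eta x.1) < ⊤)
    ↔
    (∃ κ : ℝ, 0 ≤ κ ∧ ∀ x0 : Ω → Fin n → ℝ, C.InitOK x0 →
      ∃ u, C.Admissible u ∧ ∀ k : ℕ,
        msSq C.Pr (C.traj x0 u k) ≤ κ * C.rhoStar ^ (2 * k) * msSq C.Pr x0) :=
  attainability_iff_general C hrho

end SCS
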